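/- arXiv:2308.05307 — 4 statements merged into one kernel-verified Lean document; each statement's English description precedes it below -/
import Mathlib

section
/- For all natural numbers a and all integers b, h(a+1,b) + h(a,b-1) = 2 h(a,b). -/
/-- The function `h(a,b) = ∑_{j=0}^{b} (-1)^j 2^{a-j} (a choose j)`,
with empty sum (=0) when `b < 0`. -/
def hFun (a : ℕ) (b : ℤ) : ℤ :=
  if b < 0 then 0
  else ∑ j ∈ Finset.range (b.toNat + 1), (-1 : ℤ) ^ j * 2 ^ (a - j) * (a.choose j)

lemma hKey (a j : ℕ) :
    (-1 : ℤ) ^ (j+1) * 2 ^ (a + 1 - (j+1)) * ((a+1).choose (j+1)) +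
      (-1 : ℤ) ^ j * 2 ^ (a - j) * (a.choose j)
    = 2 * ((-1 : ℤ) ^ (j+1) * 2 ^ (a - (j+1)) * (a.choose (j+1))) := by
  have h1 : a + 1 - (j + 1) = a - j := by omega
  rw [h1, Nat.choose_succ_succ]
  push_cast
  rcases le_or_gt (j + 1) a with h | h
  · have h2 : a - j = (a - (j+1)) + 1 := by omega
    rw [h2]
    ring
  · have hc : a.choose (j+1) = 0 := Nat.choose_eq_zero_of_lt h
    rcases le_or_gt a j with h3 | h3
    · have hc2 : a.choose j = if a = j then 1 else 0 := by
        rcases eq_or_lt_of_le h3 with rfl | h4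
        · simp
        · simp [Nat.choose_eq_zero_of_lt h4, Nat.ne_of_lt h4]
      rcases eq_or_ne a j with rfl | h5
      · simp [hc, hc2]
        ring
      · simp [hc, hc2, h5]
    · omega

lemma hSum (a n : ℕ) :
    (∑ j ∈ Finset.range (n + 1), (-1 : ℤ) ^ j * 2 ^ (a + 1 - j) * ((a+1).choose j)) +
      (∑ j ∈ Finset.range n, (-1 : ℤ) ^ j * 2 ^ (a - j) * (a.choose j))
    = 2 * ∑ j ∈ Finset.range (n + 1), (-1 : ℤ) ^ j * 2 ^ (a - j) * (a.choose j) := by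
  induction n with
  | zero => simp [pow_succ]; ring
  | succ n ih =>
    have e1 := Finset.sum_range_succ (fun j => (-1 : ℤ) ^ j * 2 ^ (a + 1 - j) * ((a+1).choose j)) (n+1)
    have e2 := Finset.sum_range_succ (fun j => (-1 : ℤ) ^ j * 2 ^ (a - j) * (a.choose j)) n
    have e3 := Finset.sum_range_succ (fun j => (-1 : ℤ) ^ j * 2 ^ (a - j) * (a.choose j)) (n+1)
    rw [e1, e2, e3]
    have hk := hKey a n
    have h1 : a + 1 - (n + 1) = a - n := by omega
    rw [h1] at hk ⊢
    linarith

theorem stmt1 (a : ℕ) (b : ℤ) :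
    hFun (a + 1) b + hFun a (b - 1) = 2 * hFun a b := by
  rcases lt_or_ge b 0 with hb | hb
  · have hb1 : b - 1 < 0 := by omega
    simp [hFun, hb, hb1]
  · rcases eq_or_lt_of_le hb with hb0 | hb1
    · have : b = 0 := hb0.symm
      subst this
      simp only [hFun]
      norm_num
      have := hSum a 0
      simpa using this
    · have hbn : ¬ b < 0 := by omega
      have hbn1 : ¬ b - 1 < 0 := by omega
      simp only [hFun, if_neg hbn, if_neg hbn1]
      have h1 : (b - 1).toNat + 1 = b.toNat := by omega
      rw [h1]
      exact hSum a b.toNat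
end

section
/- Let n, m \geq 1, let p_1 < \cdots < p_m and q_1 < \cdots < q_m be integers in [1,2n] with q_i \leq p_i for all i, such that no two elements of \{p_1,\ldots,p_m\} sum to 2n+1 and no two elements of \{q_1,\ldots,q_m\} sum to 2n+1. Let 1 \leq k \leq m satisfy q_k \leq n < p_k. Then \#\{j \in [1,m] : j \neq k,\ q_j + q_k < 2n+1 < p_j + p_k\} \leq p_k - q_k - 1. -/
/-!
A row `j < k` correlated to row `k` has `p j` in the open interval `(2n+1-p k, p k)`, and a row
`j > k` has `q j` in `(q k, 2n+1-q k)`. Both intervals are symmetric about `(2n+1)/2`, and a set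
in such an interval with no two elements summing to `2n+1` is disjoint from its reflection
`x ↦ 2n+1-x`, so it fills at most half of the interval. This bounds the two kinds of rows by
`p k - n - 1` and `n - q k`.
-/

open Finset

theorem Finset.two_mul_card_le_card_Ioo_of_add_ne {α : Type*} [AddCommGroup α] [LinearOrder α]
    [IsOrderedAddMonoid α] [LocallyFiniteOrder α] {t : Finset α} {a b : α}
    (ht : t ⊆ Ioo a b) (hsum : ∀ x ∈ t, ∀ y ∈ t, x + y ≠ a + b) :
    2 * #t ≤ #(Ioo a b) := by
  set t' := t.image (a + b - ·)
  have hreflect : t' ⊆ Ioo a b := by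
    intro z hz
    obtain ⟨x, hx, rfl⟩ := mem_image.mp hz
    have hx := mem_Ioo.mp (ht hx)
    exact mem_Ioo.mpr ⟨by simpa using sub_lt_sub_left hx.2 (a + b),
      by simpa using sub_lt_sub_left hx.1 (a + b)⟩
  have hdisj : Disjoint t t' := by
    refine disjoint_left.mpr fun x hx hx' => ?_
    obtain ⟨y, hy, hyx⟩ := mem_image.mp hx'
    exact hsum x hx y hy (by rw [← hyx]; abel)
  calc 2 * #t = #t + #t' := by rw [card_image_of_injective _ sub_right_injective, two_mul]
    _ = #(t ∪ t') := (card_union_of_disjoint hdisj).symm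
    _ ≤ #(Ioo a b) := card_le_card (union_subset ht hreflect)

theorem stmt8_general (n m : ℕ) (p q : Fin m → ℤ)
    (hp : StrictMono p) (hq : StrictMono q)
    (hpsum : ∀ i j, p i + p j ≠ 2 * n + 1)
    (hqsum : ∀ i j, q i + q j ≠ 2 * n + 1)
    (k : Fin m) (hk₁ : q k ≤ n) (hk₂ : (n : ℤ) < p k) :
    ((Finset.univ.filter (fun j : Fin m =>
        j ≠ k ∧ q j + q k < 2 * n + 1 ∧ (2 * n + 1 : ℤ) < p j + p k)).card : ℤ)
      ≤ p k - q k - 1 := by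
  set S := Finset.univ.filter (fun j : Fin m =>
    j ≠ k ∧ q j + q k < 2 * n + 1 ∧ (2 * n + 1 : ℤ) < p j + p k)
  have hsplit := card_filter_add_card_filter_not (s := S) (· < k)
  have hbelow : 2 * #(S.filter (· < k)) ≤ #(Ioo (2 * n + 1 - p k) (p k)) := by
    rw [← card_image_of_injective _ hp.injective]
    refine two_mul_card_le_card_Ioo_of_add_ne ?_ ?_
    · intro x hx
      obtain ⟨j, hj, rfl⟩ := mem_image.mp hx
      simp only [S, mem_filter, mem_univ, true_and] at hj
      have := hp hj.2
      rw [mem_Ioo]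
      omega
    · simp only [mem_image, sub_add_cancel]
      rintro _ ⟨i, -, rfl⟩ _ ⟨j, -, rfl⟩
      exact hpsum i j
  have habove : 2 * #(S.filter (¬ · < k)) ≤ #(Ioo (q k) (2 * n + 1 - q k)) := by
    rw [← card_image_of_injective _ hq.injective]
    refine two_mul_card_le_card_Ioo_of_add_ne ?_ ?_
    · intro x hx
      obtain ⟨j, hj, rfl⟩ := mem_image.mp hx
      simp only [S, mem_filter, mem_univ, true_and] at hj
      have := hq (lt_of_le_of_ne (not_lt.mp hj.2) (Ne.symm hj.1.1))
      rw [mem_Ioo]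
      omega
    · simp only [mem_image, add_sub_cancel]
      rintro _ ⟨i, -, rfl⟩ _ ⟨j, -, rfl⟩
      exact hqsum i j
  rw [Int.card_Ioo] at hbelow habove
  omega

theorem stmt8 (n m : ℕ) (hn : 1 ≤ n) (hm : 1 ≤ m) (p q : Fin m → ℤ)
    (hp : StrictMono p) (hq : StrictMono q)
    (hpmem : ∀ i, 1 ≤ p i ∧ p i ≤ 2 * n) (hqmem : ∀ i, 1 ≤ q i ∧ q i ≤ 2 * n)
    (hle : ∀ i, q i ≤ p i)
    (hpsum : ∀ i j, p i + p j ≠ 2 * n + 1)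
    (hqsum : ∀ i j, q i + q j ≠ 2 * n + 1)
    (k : Fin m) (hk₁ : q k ≤ n) (hk₂ : (n : ℤ) < p k) :
    ((Finset.univ.filter (fun j : Fin m =>
        j ≠ k ∧ q j + q k < 2 * n + 1 ∧ (2 * n + 1 : ℤ) < p j + p k)).card : ℤ)
      ≤ p k - q k - 1 :=
  stmt8_general n m p q hp hq hpsum hqsum k hk₁ hk₂
end

section
/- Let A be a commutative ring that is free as a \mathbb{Z}-module with basis B. Assume that for all b, b' \in B, the product b \cdot b' is a nonzero \mathbb{Z}_{\geq 0}-linear combination of elements of B. Suppose g \in A satisfies g \cdot b \in B for every b \in B, and suppose u_1, \ldots, u_\ell \in B satisfy u_1 \cdot u_2 \cdots u_\ell = g. Then for each i and each b \in B, the product u_i \cdot b is an element of B. -/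
/-!
Let `σ = b.sumCoords` be the sum of the coordinates. On the cone of elements with nonnegative
coordinates, left multiplication by a basis element does not decrease `σ`, because every product
of two basis elements lies in the cone and is nonzero, hence has `σ ≥ 1`. A nonzero element of the
cone has `σ ≥ 1`, with equality only for basis elements. Now `u_k * b_i` lies in the cone and
`(∏_{m ≠ k} u_m) * (u_k * b_i) = g * b_i` is a basis element, so `1 ≤ σ (u_k * b_i) ≤ 1`.
-/

namespace Module.Basis

variable {ι A : Type*}

section AddCommGroup

variable [AddCommGroup A] (b : Basis ι ℤ A)

lemma sumCoords_eq_sum_support (x : A) :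
    b.sumCoords x = ∑ k ∈ (b.repr x).support, b.repr x k := by
  simp [coe_sumCoords, Finsupp.sum]

lemma exists_mem_support_one_le_repr {x : A} (hx0 : x ≠ 0) (hx : 0 ≤ b.repr x) :
    ∃ k ∈ (b.repr x).support, 1 ≤ b.repr x k := by
  obtain ⟨k, hk⟩ : (b.repr x).support.Nonempty :=
    Finsupp.support_nonempty_iff.2 (b.repr.map_ne_zero_iff.2 hx0)
  exact ⟨k, hk, Int.add_one_le_of_lt ((hx k).lt_of_ne' (Finsupp.mem_support_iff.1 hk))⟩

lemma one_le_sumCoords {x : A} (hx0 : x ≠ 0) (hx : 0 ≤ b.repr x) : 1 ≤ b.sumCoords x := by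
  obtain ⟨k, hk, hk1⟩ := b.exists_mem_support_one_le_repr hx0 hx
  calc 1 ≤ b.repr x k := hk1
    _ ≤ b.sumCoords x := by
      rw [sumCoords_eq_sum_support]
      exact Finset.single_le_sum (fun j _ => hx j) hk

lemma exists_eq_of_sumCoords_eq_one {x : A} (hx : 0 ≤ b.repr x) (h1 : b.sumCoords x = 1) :
    ∃ k, x = b k := by
  classical
  have hx0 : x ≠ 0 := by rintro rfl; simp at h1
  obtain ⟨k, hk, hk1⟩ := b.exists_mem_support_one_le_repr hx0 hx
  have hsplit := Finset.add_sum_erase _ (b.repr x) hk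
  have hrest_nonneg : 0 ≤ ∑ j ∈ (b.repr x).support.erase k, b.repr x j :=
    Finset.sum_nonneg fun j _ => hx j
  rw [← sumCoords_eq_sum_support, h1] at hsplit
  have hrest : ∀ j ∈ (b.repr x).support.erase k, b.repr x j = 0 :=
    (Finset.sum_eq_zero_iff_of_nonneg fun j _ => hx j).1 (by omega)
  refine ⟨k, b.repr.injective (Finsupp.ext fun j => ?_)⟩
  rw [repr_self, Finsupp.single_apply]
  split_ifs with hkj
  · subst hkj; omega
  · by_contra hj
    exact hj (hrest j (Finset.mem_erase.2 ⟨Ne.symm hkj, Finsupp.mem_support_iff.2 hj⟩))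

end AddCommGroup

section Ring

variable [Ring A] (b : Basis ι ℤ A)

lemma mul_eq_sum_repr (x y : A) : x * y = (b.repr y).sum fun j c => c • (x * b j) := by
  conv_lhs => rw [← b.linearCombination_repr y, Finsupp.linearCombination_apply, Finsupp.mul_sum]
  simp only [mul_smul_comm]

lemma repr_basis_mul_nonneg (hpos : ∀ i j, 0 ≤ b.repr (b i * b j)) (i : ι) {y : A}
    (hy : 0 ≤ b.repr y) : 0 ≤ b.repr (b i * y) := by
  intro k
  rw [mul_eq_sum_repr b, map_finsuppSum, Finsupp.sum_apply]
  refine Finset.sum_nonneg fun j _ => ?_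
  simp only [map_zsmul, Finsupp.smul_apply, smul_eq_mul]
  exact mul_nonneg (hy j) (hpos i j k)

lemma sumCoords_le_sumCoords_basis_mul (hnz : ∀ i j, b i * b j ≠ 0)
    (hpos : ∀ i j, 0 ≤ b.repr (b i * b j)) (i : ι) {y : A} (hy : 0 ≤ b.repr y) :
    b.sumCoords y ≤ b.sumCoords (b i * y) := by
  rw [mul_eq_sum_repr b, map_finsuppSum, sumCoords_eq_sum_support, Finsupp.sum]
  refine Finset.sum_le_sum fun j _ => ?_
  simp only [map_zsmul, smul_eq_mul]
  exact le_mul_of_one_le_right (hy j) (b.one_le_sumCoords (hnz i j) (hpos i j))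

end Ring

lemma prod_mul_nonneg_and_sumCoords_le [CommRing A] (b : Basis ι ℤ A)
    (hnz : ∀ i j, b i * b j ≠ 0) (hpos : ∀ i j, 0 ≤ b.repr (b i * b j))
    {κ : Type*} (v : κ → ι) (s : Finset κ) {y : A} (hy : 0 ≤ b.repr y) :
    0 ≤ b.repr ((∏ m ∈ s, b (v m)) * y) ∧
      b.sumCoords y ≤ b.sumCoords ((∏ m ∈ s, b (v m)) * y) := by
  classical
  induction s using Finset.induction with
  | empty => simp [hy]
  | insert a s ha ih =>
    rw [Finset.prod_insert ha, mul_assoc]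
    exact ⟨b.repr_basis_mul_nonneg hpos _ ih.1,
      ih.2.trans (b.sumCoords_le_sumCoords_basis_mul hnz hpos _ ih.1)⟩

end Module.Basis

/-- Abstract positivity argument (after Buch–Wang): in a commutative ring that is
free as a `ℤ`-module with basis `b`, if all products of basis elements are nonzero
nonnegative combinations of basis elements, `g` multiplies the basis into itself,
and a product of basis elements `u 1 ⋯ u ℓ` equals `g`, then each `u i` multiplies
the basis into itself. -/
theorem stmt9 {A : Type*} [CommRing A] {ι : Type*} (b : Module.Basis ι ℤ A)
    (hnz : ∀ i j, b i * b j ≠ 0)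
    (hpos : ∀ i j k, 0 ≤ b.repr (b i * b j) k)
    (g : A) (hg : ∀ i, ∃ j, g * b i = b j)
    (ℓ : ℕ) (u : Fin ℓ → ι) (hu : (∏ k, b (u k)) = g) :
    ∀ k : Fin ℓ, ∀ i, ∃ j, b (u k) * b i = b j := by
  intro k i
  obtain ⟨j, hj⟩ := hg i
  have hpos' : ∀ i j, 0 ≤ b.repr (b i * b j) := hpos
  have hprod : (∏ m ∈ Finset.univ.erase k, b (u m)) * (b (u k) * b i) = b j := by
    rw [← mul_assoc, Finset.prod_erase_mul _ _ (Finset.mem_univ k), hu, hj]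
  have hle := (b.prod_mul_nonneg_and_sumCoords_le hnz hpos' u (Finset.univ.erase k)
    (hpos' (u k) i)).2
  rw [hprod, Module.Basis.sumCoords_self_apply] at hle
  exact b.exists_eq_of_sumCoords_eq_one (hpos' _ _)
    (le_antisymm hle (b.one_le_sumCoords (hnz _ _) (hpos' _ _)))
end

section
/- Let n, m \geq 1 and let p_1 < \cdots < p_m be integers in [1,2n] with p_i + p_j \neq 2n+1 for all i, j, and suppose q_1 + p_m \geq 2n+1 where q_1 < \cdots < q_m are integers in [1,2n] with q_i \leq p_i for all i and q_i + q_j \neq 2n+1 for all i,j. Then \#\{ i \in [1, m-1] : q_i + q_m < 2n+1 < p_i + p_m \} \leq p_m - q_m. -/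
/-! Since `q` is increasing, every row `i` correlated to row `m` satisfies
`2n + 1 - p_m ≤ q_1 ≤ q_i ≤ 2n - q_m`, and `q` is injective, so there are at most as many such
rows as integers in that interval, namely `p_m - q_m`. -/

theorem Int.card_le_of_injOn_of_mapsTo_Icc {ι : Type*} {s : Finset ι} {f : ι → ℤ} {a b : ℤ}
    (hf : Set.InjOn f s) (hmaps : ∀ i ∈ s, f i ∈ Finset.Icc a b) (hab : a ≤ b + 1) :
    (s.card : ℤ) ≤ b + 1 - a := by
  have hcard : s.card ≤ (Finset.Icc a b).card := Finset.card_le_card_of_injOn f hmaps hf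
  rw [Int.card_Icc] at hcard
  omega

theorem stmt16 (n m : ℕ) (hm : 1 ≤ m) (p q : Fin m → ℤ)
    (hq : StrictMono q)
    (hle : ∀ i, q i ≤ p i)
    (hqp : (2 * n + 1 : ℤ) ≤ q ⟨0, hm⟩ + p ⟨m - 1, by omega⟩) :
    ((Finset.univ.filter (fun i : Fin m =>
        i ≠ ⟨m - 1, by omega⟩ ∧
        q i + q ⟨m - 1, by omega⟩ < 2 * n + 1 ∧
        (2 * n + 1 : ℤ) < p i + p ⟨m - 1, by omega⟩)).card : ℤ)
      ≤ p ⟨m - 1, by omega⟩ - q ⟨m - 1, by omega⟩ := by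
  set M : Fin m := ⟨m - 1, by omega⟩
  have hcorrelated_mem : ∀ i ∈ Finset.univ.filter (fun i : Fin m =>
      i ≠ M ∧ q i + q M < 2 * n + 1 ∧ (2 * n + 1 : ℤ) < p i + p M),
      q i ∈ Finset.Icc (2 * n + 1 - p M) (2 * n - q M) := by
    intro i hi
    have hq_first : q ⟨0, hm⟩ ≤ q i := hq.monotone (show (⟨0, hm⟩ : Fin m) ≤ i from Nat.zero_le _)
    simp only [Finset.mem_filter, Finset.mem_univ, true_and] at hi
    rw [Finset.mem_Icc]
    omega
  have hbound := Int.card_le_of_injOn_of_mapsTo_Icc hq.injective.injOn hcorrelated_mem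
    (by linarith [hle M])
  linarith
end
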